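/- arXiv:1107.2957 — 8 statements merged into one kernel-verified Lean document; each statement's English description precedes it below -/
import Mathlib

section
/- If a mechanism (w,p) for scheduling on related machines is truthful and anonymous, then the functions h_i appearing in the Archer–Tardos payment formula are identical across machines: there is a single function h : ℝ_{>0}^{m-1} → ℝ such that h_i(v) = h(v) for all machines i and all bid vectors v of the other machines. -/
open MeasureTheory

/-!
Let machine `k` bid `t` and swap it with another machine `l`. Anonymity equates the allocations
and the payments of `k` before and of `l` after the swap, and also the integrands
`w (update b k u) k` of the two Archer–Tardos formulas for every `u` outside the finitely many
other bids, hence almost everywhere. So the two formulas differ only in their `h` terms. If `k`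
and `l` are adjacent and `t` differs from all other bids, then `l` sees after the swap the same
ordered vector of other bids that `k` saw before, whence `h k = h l` there; induction along
`Fin (n + 1)` finishes.
-/

theorem Fin.swap_succ_castSucc_succAbove {n : ℕ} (j i : Fin n) :
    Equiv.swap j.succ j.castSucc (j.castSucc.succAbove i) = j.succ.succAbove i := by
  rw [Equiv.swap_apply_def]
  split_ifs <;>
    simp only [Fin.ext_iff, Fin.succAbove, Fin.lt_def, Fin.val_succ, Fin.val_castSucc] at * <;>
    split_ifs at * <;> simp only [Fin.val_succ, Fin.val_castSucc] at * <;> omega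

theorem Fin.insertNth_succ_comp_swap {α : Type*} {n : ℕ} (j : Fin n) (x : α) (v : Fin n → α) :
    j.succ.insertNth x v ∘ Equiv.swap j.succ j.castSucc = j.castSucc.insertNth x v :=
  (Fin.insertNth_eq_iff.2 ⟨by simp, funext fun i => by
    simp [Fin.removeNth, Fin.swap_succ_castSucc_succAbove]⟩).symm

theorem exists_pos_notMem_range {ι : Type*} [Finite ι] (v : ι → ℝ) :
    ∃ t, 0 < t ∧ t ∉ Set.range v :=
  (Set.Ioi_infinite 0).exists_notMem_finite (Set.finite_range v)

section Mechanism

open Function Set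

variable {m : ℕ}

def Anonymous (f : (Fin m → ℝ) → Fin m → ℝ) : Prop :=
  ∀ b : Fin m → ℝ, (∀ j, 0 < b j) → ∀ k l : Fin m, (∀ j, j ≠ k → b j ≠ b k) → l ≠ k →
    f (b ∘ Equiv.swap k l) l = f b k

def HasArcherTardosPayments (w p : (Fin (m + 1) → ℝ) → Fin (m + 1) → ℝ)
    (h : Fin (m + 1) → (Fin m → ℝ) → ℝ) : Prop :=
  ∀ b : Fin (m + 1) → ℝ, (∀ j, 0 < b j) → ∀ i,
    p b i = h i (b ∘ i.succAbove) + b i * w b i -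
      ∫ u in Ioc (0 : ℝ) (b i), w (update b i u) i

theorem setIntegral_update_swap_eq {w : (Fin m → ℝ) → Fin m → ℝ} (hw : Anonymous w)
    {b : Fin m → ℝ} (hb : ∀ j, 0 < b j) {k l : Fin m} (hlk : l ≠ k) (t : ℝ) :
    ∫ u in Ioc 0 t, w (update (b ∘ Equiv.swap k l) l u) l =
      ∫ u in Ioc 0 t, w (update b k u) k := by
  refine setIntegral_congr_ae measurableSet_Ioc ?_
  have hfresh : ∀ᵐ u : ℝ, u ∉ b '' {k}ᶜ :=
    measure_eq_zero_iff_ae_notMem.1 ((toFinite _).measure_zero _)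
  filter_upwards [hfresh] with u hu hu0
  have hpos : ∀ j, 0 < update b k u j := by
    intro j
    rcases eq_or_ne j k with rfl | hj
    · simpa using hu0.1
    · simpa [hj] using hb j
  have huniq : ∀ j, j ≠ k → update b k u j ≠ update b k u k := by
    intro j hj
    simpa [hj] using fun h => hu ⟨j, hj, h⟩
  simpa [update_comp_equiv] using hw _ hpos k l huniq hlk

variable {n : ℕ} {w p : (Fin (n + 1) → ℝ) → Fin (n + 1) → ℝ}
  {h : Fin (n + 1) → (Fin n → ℝ) → ℝ}

theorem HasArcherTardosPayments.h_comp_swap_eq (hpay : HasArcherTardosPayments w p h)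
    (hw : Anonymous w) (hp : Anonymous p) {b : Fin (n + 1) → ℝ} (hb : ∀ j, 0 < b j)
    {k l : Fin (n + 1)} (huniq : ∀ j, j ≠ k → b j ≠ b k) (hlk : l ≠ k) :
    h l ((b ∘ Equiv.swap k l) ∘ l.succAbove) = h k (b ∘ k.succAbove) := by
  have hpk := hpay b hb k
  have hpl := hpay (b ∘ Equiv.swap k l) (fun j => hb _) l
  have hbl : (b ∘ Equiv.swap k l) l = b k := by simp
  rw [hbl, hw b hb k l huniq hlk, setIntegral_update_swap_eq hw hb hlk, hp b hb k l huniq hlk,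
    hpk] at hpl
  linarith

theorem HasArcherTardosPayments.h_castSucc_eq_h_succ (hpay : HasArcherTardosPayments w p h)
    (hw : Anonymous w) (hp : Anonymous p) (j : Fin n) {v : Fin n → ℝ} (hv : ∀ i, 0 < v i) :
    h j.castSucc v = h j.succ v := by
  obtain ⟨t, ht, hfresh⟩ := exists_pos_notMem_range v
  set b : Fin (n + 1) → ℝ := j.succ.insertNth t v
  have hb : ∀ i, 0 < b i := by
    rw [Fin.forall_iff_succAbove j.succ]
    simpa [b, ht] using hv
  have huniq : ∀ i, i ≠ j.succ → b i ≠ b j.succ := by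
    rw [Fin.forall_iff_succAbove j.succ]
    simpa [b] using fun i h => hfresh ⟨i, h⟩
  simpa [b, Fin.insertNth_succ_comp_swap, Fin.insertNth_comp_succAbove] using
    hpay.h_comp_swap_eq hw hp hb huniq (Fin.castSucc_lt_succ (i := j)).ne

end Mechanism

theorem common_h_of_truthful_anonymous_general (n : ℕ)
    (w p : (Fin (n + 1) → ℝ) → Fin (n + 1) → ℝ)
    (h : Fin (n + 1) → (Fin n → ℝ) → ℝ)
    -- truthful payments (Archer–Tardos form)
    (hpay : ∀ b : Fin (n + 1) → ℝ, (∀ j, 0 < b j) → ∀ i,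
      p b i = h i (b ∘ i.succAbove) + b i * w b i -
        ∫ u in Set.Ioc (0 : ℝ) (b i), w (Function.update b i u) i)
    -- anonymity: swapping a unique bid with another machine's bid swaps
    -- allocation and payment
    (hanon : ∀ b : Fin (n + 1) → ℝ, (∀ j, 0 < b j) →
      ∀ k l : Fin (n + 1), (∀ j, j ≠ k → b j ≠ b k) → l ≠ k →
        w (b ∘ Equiv.swap k l) l = w b k ∧ p (b ∘ Equiv.swap k l) l = p b k) :
    ∃ h0 : (Fin n → ℝ) → ℝ, ∀ (i : Fin (n + 1)) (v : Fin n → ℝ),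
      (∀ j, 0 < v j) → h i v = h0 v := by
  have hw : Anonymous w := fun b hb k l huniq hlk => (hanon b hb k l huniq hlk).1
  have hp : Anonymous p := fun b hb k l huniq hlk => (hanon b hb k l huniq hlk).2
  refine ⟨h 0, fun i v hv => ?_⟩
  induction i using Fin.induction with
  | zero => rfl
  | succ j ih => rw [← HasArcherTardosPayments.h_castSucc_eq_h_succ hpay hw hp j hv, ih]

/-- If a mechanism `(w, p)` for scheduling on related machines is truthful (so payments
have the Archer–Tardos form with functions `h i`) and anonymous, then the `h i` are
identical across machines: there is a single `h0` with `h i v = h0 v` for all machines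
`i` and all positive bid vectors `v` of the other machines. -/
theorem common_h_of_truthful_anonymous (n : ℕ) (L : ℝ) (hL : 0 < L)
    (w p : (Fin (n + 1) → ℝ) → Fin (n + 1) → ℝ)
    (h : Fin (n + 1) → (Fin n → ℝ) → ℝ)
    -- allocations are nonnegative workloads summing to the total job length L
    (halloc : ∀ b : Fin (n + 1) → ℝ, (∀ j, 0 < b j) →
      (∀ i, 0 ≤ w b i) ∧ ∑ i, w b i = L)
    -- truthful payments (Archer–Tardos form)
    (hpay : ∀ b : Fin (n + 1) → ℝ, (∀ j, 0 < b j) → ∀ i,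
      p b i = h i (b ∘ i.succAbove) + b i * w b i -
        ∫ u in Set.Ioc (0 : ℝ) (b i), w (Function.update b i u) i)
    -- monotone decreasing allocation
    (hmono : ∀ b : Fin (n + 1) → ℝ, (∀ j, 0 < b j) → ∀ i, ∀ x y : ℝ,
      0 < x → x ≤ y → w (Function.update b i y) i ≤ w (Function.update b i x) i)
    -- anonymity: swapping a unique bid with another machine's bid swaps
    -- allocation and payment
    (hanon : ∀ b : Fin (n + 1) → ℝ, (∀ j, 0 < b j) →
      ∀ k l : Fin (n + 1), (∀ j, j ≠ k → b j ≠ b k) → l ≠ k →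
        w (b ∘ Equiv.swap k l) l = w b k ∧ p (b ∘ Equiv.swap k l) l = p b k) :
    ∃ h0 : (Fin n → ℝ) → ℝ, ∀ (i : Fin (n + 1)) (v : Fin n → ℝ),
      (∀ j, 0 < v j) → h i v = h0 v :=
  common_h_of_truthful_anonymous_general n w p h hpay hanon
end

section
/- If a mechanism (w,p) is truthful, envy-free, and anonymous with common payment function h, then for all bid vectors t and all machines i, j: h(t_{-i}) − h(t_{-j}) ≤ L·t_i + (t_j − t_i)·w_i(t), where L is the total length of all jobs. -/
open MeasureTheory

/-! Substituting the truthful payment formula into machine `j`'s no-envy constraint towards `i`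
leaves `h(t₋ᵢ) − h(t₋ⱼ) ≤ (tⱼ − tᵢ)·wᵢ(t) + ∫₀^{tᵢ} wᵢ − ∫₀^{tⱼ} wⱼ`; since every workload lies
in `[0, L]`, the first integral is at most `L·tᵢ` and the second is nonnegative. -/

lemma setIntegral_Ioc_le_mul_of_mem_Icc {f : ℝ → ℝ} {a b C : ℝ} (hab : a ≤ b)
    (hf : ∀ x ∈ Set.Ioc a b, f x ∈ Set.Icc 0 C) :
    ∫ x in Set.Ioc a b, f x ≤ C * (b - a) := by
  have hnorm : ∀ x ∈ Set.Ioc a b, ‖f x‖ ≤ C := fun x hx => by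
    rw [Real.norm_of_nonneg (hf x hx).1]
    exact (hf x hx).2
  calc ∫ x in Set.Ioc a b, f x ≤ ‖∫ x in Set.Ioc a b, f x‖ := Real.le_norm_self _
    _ ≤ C * volume.real (Set.Ioc a b) :=
      norm_setIntegral_le_of_norm_le_const measure_Ioc_lt_top hnorm
    _ = C * (b - a) := by rw [Real.volume_real_Ioc_of_le hab]

lemma pos_update {ι : Type*} [DecidableEq ι] {b : ι → ℝ} (hb : ∀ j, 0 < b j) (k : ι)
    {x : ℝ} (hx : 0 < x) : ∀ j, 0 < Function.update b k x j :=
  Function.forall_update_iff b (p := fun _ y => 0 < y) |>.mpr ⟨hx, fun j _ => hb j⟩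

section WorkloadIntegral

variable {ι : Type*} [DecidableEq ι] {L : ℝ} {w : (ι → ℝ) → ι → ℝ}
  {b : ι → ℝ}

lemma setIntegral_workload_nonneg
    (hrange : ∀ b : ι → ℝ, (∀ j, 0 < b j) → ∀ i, 0 ≤ w b i ∧ w b i ≤ L)
    (hb : ∀ j, 0 < b j) (i : ι) :
    0 ≤ ∫ x in Set.Ioc (0 : ℝ) (b i), w (Function.update b i x) i :=
  setIntegral_nonneg measurableSet_Ioc fun _ hx =>
    (hrange _ (pos_update hb i hx.1) i).1

lemma setIntegral_workload_le
    (hrange : ∀ b : ι → ℝ, (∀ j, 0 < b j) → ∀ i, 0 ≤ w b i ∧ w b i ≤ L)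
    (hb : ∀ j, 0 < b j) (i : ι) :
    ∫ x in Set.Ioc (0 : ℝ) (b i), w (Function.update b i x) i ≤ L * b i := by
  simpa using setIntegral_Ioc_le_mul_of_mem_Icc (hb i).le fun x hx =>
    hrange _ (pos_update hb i hx.1) i

end WorkloadIntegral

/-- If a mechanism `(w, p)` is truthful, envy-free and anonymous with common payment
function `h`, then for all positive bid vectors `t` and machines `i, j`,
`h(t₋ᵢ) − h(t₋ⱼ) ≤ L·tᵢ + (tⱼ − tᵢ)·wᵢ(t)`, where `L` is the total job length. -/
theorem envy_free_h_inequality (n : ℕ) (L : ℝ)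
    (w p : (Fin (n + 1) → ℝ) → Fin (n + 1) → ℝ)
    (h : (Fin n → ℝ) → ℝ)
    -- workloads lie between 0 and the total job length L
    (hrange : ∀ b : Fin (n + 1) → ℝ, (∀ j, 0 < b j) → ∀ i,
      0 ≤ w b i ∧ w b i ≤ L)
    -- truthful payments with common h (anonymity)
    (hpay : ∀ b : Fin (n + 1) → ℝ, (∀ j, 0 < b j) → ∀ i,
      p b i = h (b ∘ i.succAbove) + b i * w b i -
        ∫ x in Set.Ioc (0 : ℝ) (b i), w (Function.update b i x) i)
    -- envy-freeness: machine j does not envy machine i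
    (hEF : ∀ b : Fin (n + 1) → ℝ, (∀ j, 0 < b j) → ∀ i j,
      p b i - b j * w b i ≤ p b j - b j * w b j) :
    ∀ t : Fin (n + 1) → ℝ, (∀ j, 0 < t j) → ∀ i j,
      h (t ∘ i.succAbove) - h (t ∘ j.succAbove) ≤ L * t i + (t j - t i) * w t i := by
  intro t ht i j
  have hEFij := hEF t ht i j
  rw [hpay t ht i, hpay t ht j] at hEFij
  linear_combination hEFij + setIntegral_workload_le hrange ht i +
    setIntegral_workload_nonneg hrange ht j
end

section
/- Let M = (w,p) be a deterministic, truthful, envy-free, individually rational, and anonymous mechanism for Q||C_max on m machines. Then M is not c-approximate for any c < 2 − 1/m. -/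
/-!
Take `m` unit jobs and bids that all lie in a window `[s, ρ s]` with `c ρ < 2`: a machine
receiving two jobs would have running time at least `2 s > c ρ s`, so every machine receives
exactly one job. On such profiles envy-freeness makes all payments equal, and truthfulness makes a
machine's payment independent of its own bid as long as its workload does not change. Raising the
bids from `s` to `ρ s` one machine at a time therefore preserves the common payment, so the
payment at the uniform bid `ρ ^ N` equals the one at the uniform bid `1`. Individual rationality
makes it at least `ρ ^ N` for every `N`, which is impossible since `ρ > 1`.
-/

open Finset Function

section Mechanism

variable {ι : Type*} (w p : (ι → ℝ) → ι → ℝ)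

def IsTruthful [DecidableEq ι] : Prop :=
  ∀ b : ι → ℝ, (∀ i, 0 < b i) → ∀ i (x : ℝ), 0 < x →
    p (update b i x) i - b i * w (update b i x) i ≤ p b i - b i * w b i

def IsEnvyFree : Prop :=
  ∀ b : ι → ℝ, (∀ i, 0 < b i) → ∀ i k, p b k - b i * w b k ≤ p b i - b i * w b i

def IsIndividuallyRational : Prop :=
  ∀ b : ι → ℝ, (∀ i, 0 < b i) → ∀ i, 0 ≤ p b i - b i * w b i

variable {w p}

theorem IsEnvyFree.payment_eq_of_workload_eq (hef : IsEnvyFree w p) {b : ι → ℝ}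
    (hb : ∀ i, 0 < b i) {i k : ι} (hw : w b i = w b k) : p b i = p b k := by
  have hik := hef b hb i k
  have hki := hef b hb k i
  rw [hw] at hik hki
  linarith

theorem IsTruthful.payment_update_eq [DecidableEq ι] (htr : IsTruthful w p) {b : ι → ℝ}
    (hb : ∀ i, 0 < b i) {i : ι} {x : ℝ} (hx : 0 < x) (hw : w (update b i x) i = w b i) :
    p (update b i x) i = p b i := by
  have hb' : ∀ k, 0 < update b i x k := by
    intro k
    rcases eq_or_ne k i with rfl | hk
    · simpa using hx
    · simpa [hk] using hb k
  have up := htr b hb i x hx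
  have down := htr (update b i x) hb' i (b i) (hb i)
  rw [update_idem, update_eq_self, update_self] at down
  rw [hw] at up down
  linarith

variable [DecidableEq ι] [Fintype ι]

theorem payment_const_eq_of_workload_eq (htr : IsTruthful w p) (hef : IsEnvyFree w p)
    {x y d : ℝ} (hx : 0 < x) (hy : 0 < y)
    (hw : ∀ b : ι → ℝ, (∀ i, b i = x ∨ b i = y) → ∀ i, w b i = d) (i : ι) :
    p (fun _ => y) i = p (fun _ => x) i := by
  set q : Finset ι → ι → ℝ := fun T => T.piecewise (fun _ => y) (fun _ => x)
  have hq_mem : ∀ T k, q T k = x ∨ q T k = y := by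
    intro T k
    by_cases hk : k ∈ T <;> simp [q, hk]
  have hq_pos : ∀ T k, 0 < q T k := fun T k => by
    rcases hq_mem T k with h | h <;> rw [h] <;> assumption
  have hq_w : ∀ T k, w (q T) k = d := fun T => hw _ (hq_mem T)
  suffices ∀ T, p (q T) i = p (fun _ => x) i by simpa [q] using this univ
  intro T
  induction T using Finset.induction_on with
  | empty => simp [q]
  | insert a T _ ih =>
    have hinsert : q (insert a T) = update (q T) a y := piecewise_insert _ _ _ a
    calc p (q (insert a T)) i = p (q (insert a T)) a :=
          hef.payment_eq_of_workload_eq (hq_pos _) (by rw [hq_w, hq_w])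
      _ = p (q T) a := by
          rw [hinsert]
          exact htr.payment_update_eq (hq_pos T) hy (by rw [← hinsert, hq_w, hq_w])
      _ = p (q T) i := hef.payment_eq_of_workload_eq (hq_pos T) (by rw [hq_w, hq_w])
      _ = p (fun _ => x) i := ih

theorem IsIndividuallyRational.false_of_workload_eq_on_windows [Nonempty ι]
    (hir : IsIndividuallyRational w p) (htr : IsTruthful w p) (hef : IsEnvyFree w p)
    {ρ d : ℝ} (hρ : 1 < ρ) (hd : 0 < d)
    (hw : ∀ s > 0, ∀ b : ι → ℝ, (∀ i, s ≤ b i ∧ b i ≤ ρ * s) → ∀ i, w b i = d) : False := by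
  obtain ⟨i⟩ := ‹Nonempty ι›
  have hρ_pos : 0 < ρ := one_pos.trans hρ
  have hscale : ∀ N : ℕ, p (fun _ => ρ ^ N) i = p (fun _ => 1) i := by
    intro N
    induction N with
    | zero => simp
    | succ N ih =>
      rw [← ih]
      refine payment_const_eq_of_workload_eq (d := d) htr hef
        (by positivity) (by positivity) ?_ i
      refine fun b hb => hw (ρ ^ N) (by positivity) b fun k => ?_
      have hle : ρ ^ N ≤ ρ ^ (N + 1) := pow_le_pow_right₀ hρ.le N.le_succ
      rcases hb k with h | h <;> rw [h, ← pow_succ']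
      exacts [⟨le_rfl, hle⟩, ⟨hle, le_rfl⟩]
  have hlarge : ∀ N : ℕ, ρ ^ N * d ≤ p (fun _ => 1) i := by
    intro N
    have hwN := hw (ρ ^ N) (by positivity) (fun _ => ρ ^ N)
      (fun _ => ⟨le_rfl, le_mul_of_one_le_left (by positivity) hρ.le⟩) i
    have hirN := hir (fun _ => ρ ^ N) (fun _ => by positivity) i
    rw [hwN, hscale N] at hirN
    linarith
  obtain ⟨N, hN⟩ := pow_unbounded_of_one_lt (p (fun _ => 1) i / d) hρ
  linarith [(div_lt_iff₀ hd).mp hN, hlarge N]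

end Mechanism

section UnitJobs

variable {ι : Type*} [Fintype ι] [DecidableEq ι]

theorem card_filter_eq_one_of_injective {σ : ι → ι} (hσ : Injective σ) (i : ι) :
    #{j | σ j = i} = 1 := by
  obtain ⟨j, rfl⟩ := (Finite.injective_iff_surjective.mp hσ) i
  exact card_eq_one.mpr ⟨j, by ext; simp [hσ.eq_iff]⟩

theorem injective_of_le_mul_sup' (hne : (univ : Finset ι).Nonempty) {σ : ι → ι}
    {b : ι → ℝ} {c ρ s : ℝ} (hs : 0 < s) (hcρ : max c 1 * ρ < 2)
    (hb : ∀ i, s ≤ b i ∧ b i ≤ ρ * s)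
    (happrox : ∀ i, b i * #{j | σ j = i} ≤ c * univ.sup' hne b) : Injective σ := by
  intro j j' hσj
  by_contra hjj'
  have htwo : (2 : ℝ) ≤ #{k | σ k = σ j} := by
    have : ({j, j'} : Finset ι) ⊆ ({k | σ k = σ j} : Finset ι) := by
      intro k hk
      rcases mem_insert.mp hk with rfl | hk <;> simp_all
    exact_mod_cast (card_pair hjj').symm.le.trans (card_le_card this)
  obtain ⟨i, hi⟩ := id hne
  have hS_low : s ≤ univ.sup' hne b := (hb i).1.trans (le_sup' b hi)
  have hS_up : univ.sup' hne b ≤ ρ * s := sup'_le _ b fun k _ => (hb k).2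
  have hmax : 0 ≤ max c 1 := le_max_of_le_right zero_le_one
  refine lt_irrefl (2 * s) ?_
  calc 2 * s ≤ b (σ j) * #{k | σ k = σ j} := by nlinarith [(hb (σ j)).1]
    _ ≤ c * univ.sup' hne b := happrox (σ j)
    _ ≤ max c 1 * univ.sup' hne b :=
        mul_le_mul_of_nonneg_right (le_max_left c 1) (hs.le.trans hS_low)
    _ ≤ max c 1 * (ρ * s) := by gcongr
    _ < 2 * s := by nlinarith

end UnitJobs

/-- A deterministic, truthful, envy-free, individually rational and anonymous mechanism
for `Q||C_max` on `m` machines cannot be `c`-approximate for any `c < 2 − 1/m`. -/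
theorem lower_bound_anonymous_mechanisms (m : ℕ) (hm : 2 ≤ m) (c : ℝ)
    -- the mechanism: for each instance (jobs l), an assignment of jobs to machines
    (A : (n : ℕ) → (Fin n → ℝ) → (Fin m → ℝ) → Fin n → Fin m)
    -- payments
    (p : (n : ℕ) → (Fin n → ℝ) → (Fin m → ℝ) → Fin m → ℝ)
    -- workloads induced by the assignment
    (W : (n : ℕ) → (Fin n → ℝ) → (Fin m → ℝ) → Fin m → ℝ)
    (hW : ∀ (n : ℕ) (l : Fin n → ℝ) (b : Fin m → ℝ) (i : Fin m),
      W n l b i = ∑ j ∈ Finset.univ.filter (fun j => A n l b j = i), l j)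
    -- truthfulness: bidding the true speed maximizes utility
    (htruth : ∀ (n : ℕ) (l : Fin n → ℝ) (b : Fin m → ℝ),
      (∀ j, 0 < l j) → (∀ i, 0 < b i) → ∀ (i : Fin m) (b' : ℝ), 0 < b' →
      p n l (Function.update b i b') i - b i * W n l (Function.update b i b') i ≤
        p n l b i - b i * W n l b i)
    -- individual rationality
    (hIR : ∀ (n : ℕ) (l : Fin n → ℝ) (b : Fin m → ℝ),
      (∀ j, 0 < l j) → (∀ i, 0 < b i) → ∀ i : Fin m,
      0 ≤ p n l b i - b i * W n l b i)
    -- envy-freeness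
    (hEF : ∀ (n : ℕ) (l : Fin n → ℝ) (b : Fin m → ℝ),
      (∀ j, 0 < l j) → (∀ i, 0 < b i) → ∀ i k : Fin m,
      p n l b k - b i * W n l b k ≤ p n l b i - b i * W n l b i)
    -- c-approximation: the mechanism's makespan is at most c times the makespan of
    -- any assignment f (hence at most c times the optimum)
    (happrox : ∀ (n : ℕ) (l : Fin n → ℝ) (b : Fin m → ℝ),
      (∀ j, 0 < l j) → (∀ i, 0 < b i) → ∀ (f : Fin n → Fin m) (i : Fin m),
      b i * W n l b i ≤
        c * Finset.univ.sup' (Finset.univ_nonempty_iff.mpr ⟨⟨0, by omega⟩⟩)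
          (fun i' => b i' * ∑ j ∈ Finset.univ.filter (fun j => f j = i'), l j))
    (hc : c < 2 - 1 / (m : ℝ)) : False := by
  have : Nonempty (Fin m) := ⟨⟨0, by omega⟩⟩
  have hc2 : c < 2 := hc.trans_le (sub_le_self _ (by positivity))
  obtain ⟨ρ, hρ, hρc⟩ : ∃ ρ, 1 < ρ ∧ ρ < 2 / max c 1 :=
    exists_between ((one_lt_div (by positivity)).mpr (max_lt hc2 one_lt_two))
  have hwindow : ∀ s > 0, ∀ b : Fin m → ℝ, (∀ i, s ≤ b i ∧ b i ≤ ρ * s) →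
      ∀ i, W m (fun _ => 1) b i = 1 := by
    intro s hs b hb i
    have hb_pos : ∀ i, 0 < b i := fun i => hs.trans_le (hb i).1
    have hinj := injective_of_le_mul_sup' _ hs
      (by rwa [lt_div_iff₀ (by positivity), mul_comm] at hρc) hb fun i => by
        simpa [hW, filter_eq'] using happrox m (fun _ => 1) b (fun _ => one_pos) hb_pos id i
    simp [hW, card_filter_eq_one_of_injective hinj]
  have hir : IsIndividuallyRational (W m fun _ => 1) (p m fun _ => 1) :=
    fun b => hIR m _ b fun _ => one_pos
  have htr : IsTruthful (W m fun _ => 1) (p m fun _ => 1) := fun b => htruth m _ b fun _ => one_pos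
  have hef : IsEnvyFree (W m fun _ => 1) (p m fun _ => 1) := fun b => hEF m _ b fun _ => one_pos
  exact hir.false_of_workload_eq_on_windows htr hef hρ one_pos hwindow
end

section
/- Let w be a scalable allocation for 2 machines with total job length L, i.e., w(cb₁, cb₂) = w(b₁, b₂) componentwise for all c > 0, where w(x,a) denotes the workload of the machine bidding x against a machine bidding a. Fix k > 1 and a > 0, and suppose w(x,a) > 0 for all 0 < x < ka. Then there exists g(k) > 0, depending only on k and w, such that ∫_a^{ka} w(x,a) dx ≥ ∫_{a/k}^a w(a,x) dx + g(k)·a. Concretely one may take g(k) = (4k²/(k+1)² − 1)·∫_{1/k}^{(k+1)/(2k)} w(1,y) dy. -/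
/-!
Write `f = w 1`. The substitutions `x = a u` and `x = a / u` turn the two integrals into
`a ∫_{1/k}^1 f(u) du` and `a ∫_{1/k}^1 f(u) / u² du`, so their difference is
`a ∫_{1/k}^1 (1/u² - 1) f(u) du`. The weight `1/u² - 1` is nonnegative on `(1/k, 1]` and at
least `1/m² - 1 = 4k²/(k+1)² - 1` on `(1/k, m]`, where `m = (k+1)/(2k)` is the midpoint of `1/k`
and `1`. Finally `∫_{1/k}^m f > 0`, since `f(u) = w(a/u, a)` and `a/u < ka` there.
-/

open MeasureTheory Set

theorem integral_Icc_comp_const_div {E : Type*} [NormedAddCommGroup E] [NormedSpace ℝ E]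
    (g : ℝ → E) {c p q : ℝ} (hc : 0 ≤ c) (hp : 0 < p) (hpq : p ≤ q) :
    ∫ x in Icc (c / q) (c / p), g x = ∫ u in Icc p q, (c / u ^ 2) • g (c / u) := by
  have hderiv : ∀ u ∈ Ioo p q, HasDerivAt (fun u => c / u) (-(c / u ^ 2)) u := fun u hu => by
    simpa [div_eq_mul_inv] using (hasDerivAt_inv (hp.trans hu.1).ne').const_mul c
  have key := integral_Icc_deriv_smul_of_deriv_nonpos (g := g)
    (continuousOn_const.div continuousOn_id fun u hu => (hp.trans_le hu.1).ne') hderiv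
    (fun u _ => neg_nonpos.2 (by positivity)) hpq
  simp only [neg_smul, integral_neg, neg_inj] at key
  exact key.symm

theorem integral_Ioc_comp_const_div {E : Type*} [NormedAddCommGroup E] [NormedSpace ℝ E]
    (g : ℝ → E) {c p q : ℝ} (hc : 0 ≤ c) (hp : 0 < p) (hpq : p ≤ q) :
    ∫ x in Ioc (c / q) (c / p), g x = ∫ u in Ioc p q, (c / u ^ 2) • g (c / u) := by
  simpa only [integral_Icc_eq_integral_Ioc] using integral_Icc_comp_const_div g hc hp hpq

theorem integrableOn_of_mem_Icc {α : Type*} [MeasurableSpace α] {μ : Measure α} {f : α → ℝ}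
    {s : Set α} {L : ℝ} (hs : MeasurableSet s) (hμs : μ s ≠ ⊤) (hf : Measurable f)
    (hbound : ∀ x ∈ s, f x ∈ Icc 0 L) : IntegrableOn f s μ :=
  Measure.integrableOn_of_bounded hμs hf.aestronglyMeasurable
    ((ae_restrict_iff' hs).2 (ae_of_all _ fun x hx => by
      rw [Real.norm_of_nonneg (hbound x hx).1]; exact (hbound x hx).2))

theorem setIntegral_Ioc_pos {f : ℝ → ℝ} {p q : ℝ} (hpq : p < q)
    (hf : IntegrableOn f (Ioc p q))
    (hf_pos : ∀ u ∈ Ioo p q, 0 < f u) : 0 < ∫ u in Ioc p q, f u := by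
  rw [← intervalIntegral.integral_of_le hpq.le]
  exact intervalIntegral.intervalIntegral_pos_of_pos_on
    ((intervalIntegrable_iff_integrableOn_Ioc_of_le hpq.le).2 hf) hf_pos hpq

theorem add_mul_integral_Ioc_le_integral_Ioc_div_sq {f : ℝ → ℝ} {p m : ℝ} (hp : 0 < p)
    (hm : m ≤ 1) (hf : IntegrableOn f (Ioc p 1)) (hf_nonneg : ∀ u ∈ Ioc p 1, 0 ≤ f u) :
    (∫ u in Ioc p 1, f u) + (1 / m ^ 2 - 1) * ∫ u in Ioc p m, f u ≤
      ∫ u in Ioc p 1, f u / u ^ 2 := by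
  have hsub : Ioc p m ⊆ Ioc p 1 := Ioc_subset_Ioc_right hm
  have hf_div : IntegrableOn (fun u => f u / u ^ 2) (Ioc p 1) := by
    simpa only [div_eq_inv_mul] using
      hf.continuousOn_mul_of_subset (K := Icc p 1) (g := fun u : ℝ => (u ^ 2)⁻¹)
        (continuousOn_id.pow 2 |>.inv₀ fun u hu => (pow_pos (hp.trans_le hu.1) 2).ne')
        isCompact_Icc measurableSet_Ioc Ioc_subset_Icc_self
  have hdiff : IntegrableOn (fun u => f u / u ^ 2 - f u) (Ioc p 1) := hf_div.sub hf
  have hgain : ∀ u ∈ Ioc p 1, 0 ≤ f u / u ^ 2 - f u := fun u hu => by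
    have hu0 := hp.trans hu.1
    rw [sub_nonneg, le_div_iff₀ (by positivity)]
    exact mul_le_of_le_one_right (hf_nonneg u hu) (pow_le_one₀ hu0.le hu.2)
  have hgain_m : ∀ u ∈ Ioc p m, (1 / m ^ 2 - 1) * f u ≤ f u / u ^ 2 - f u := fun u hu => by
    have hu0 := hp.trans hu.1
    have : 1 / m ^ 2 ≤ 1 / u ^ 2 :=
      one_div_le_one_div_of_le (by positivity) (by gcongr; exact hu.2)
    have := hf_nonneg u (hsub hu)
    rw [div_eq_mul_one_div (f u)]
    nlinarith
  calc (∫ u in Ioc p 1, f u) + (1 / m ^ 2 - 1) * ∫ u in Ioc p m, f u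
      = (∫ u in Ioc p 1, f u) + ∫ u in Ioc p m, (1 / m ^ 2 - 1) * f u := by
        rw [integral_const_mul]
    _ ≤ (∫ u in Ioc p 1, f u) + ∫ u in Ioc p m, (f u / u ^ 2 - f u) :=
        add_le_add_right (setIntegral_mono_on ((hf.mono_set hsub).const_mul _)
          (hdiff.mono_set hsub) measurableSet_Ioc hgain_m) _
    _ ≤ (∫ u in Ioc p 1, f u) + ∫ u in Ioc p 1, (f u / u ^ 2 - f u) :=
        add_le_add_right (setIntegral_mono_set hdiff
          ((ae_restrict_iff' measurableSet_Ioc).2 (ae_of_all _ hgain)) hsub.eventuallyLE) _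
    _ = ∫ u in Ioc p 1, f u / u ^ 2 := by
        rw [integral_sub hf_div hf]; ring

def ScaleInvariant (w : ℝ → ℝ → ℝ) : Prop :=
  ∀ c x a : ℝ, 0 < c → 0 < x → 0 < a → w (c * x) (c * a) = w x a

namespace ScaleInvariant

variable {w : ℝ → ℝ → ℝ} {a : ℝ}

theorem apply_mul_right (hw : ScaleInvariant w) (ha : 0 < a) {u : ℝ} (hu : 0 < u) :
    w a (a * u) = w 1 u := by
  simpa using hw a 1 u ha one_pos hu

theorem apply_div_left (hw : ScaleInvariant w) (ha : 0 < a) {u : ℝ} (hu : 0 < u) :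
    w (a / u) a = w 1 u := by
  simpa [div_mul_cancel₀ a hu.ne'] using hw (a / u) 1 u (by positivity) one_pos hu

theorem apply_one_pos (hw : ScaleInvariant w) (ha : 0 < a) {k : ℝ} (hk : 0 < k)
    (hpos : ∀ x : ℝ, 0 < x → x < k * a → 0 < w x a) {u : ℝ} (hu : 1 / k < u) :
    0 < w 1 u := by
  have hu0 : 0 < u := (one_div_pos.2 hk).trans hu
  have hku : 1 < u * k := (div_lt_iff₀ hk).1 hu
  rw [← hw.apply_div_left ha hu0]
  exact hpos _ (by positivity) ((div_lt_iff₀ hu0).2 (by nlinarith))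

theorem integral_Ioc_mul_right (hw : ScaleInvariant w) (ha : 0 < a) {p q : ℝ} (hp : 0 < p)
    (hpq : p ≤ q) : ∫ x in Ioc (a * p) (a * q), w a x = a * ∫ u in Ioc p q, w 1 u := by
  have hscaled := intervalIntegral.integral_comp_mul_left (w a) ha.ne' (a := p) (b := q)
  rw [intervalIntegral.integral_of_le hpq,
    intervalIntegral.integral_of_le (by gcongr), smul_eq_mul] at hscaled
  rw [← setIntegral_congr_fun measurableSet_Ioc
    fun u hu => hw.apply_mul_right ha (hp.trans hu.1), hscaled, mul_inv_cancel_left₀ ha.ne']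

theorem integral_Ioc_div_left (hw : ScaleInvariant w) (ha : 0 < a) {p q : ℝ} (hp : 0 < p)
    (hpq : p ≤ q) :
    ∫ x in Ioc (a / q) (a / p), w x a = a * ∫ u in Ioc p q, w 1 u / u ^ 2 := by
  rw [integral_Ioc_comp_const_div (w · a) ha.le hp hpq, ← integral_const_mul]
  refine setIntegral_congr_fun measurableSet_Ioc fun u hu => ?_
  rw [smul_eq_mul, hw.apply_div_left ha (hp.trans hu.1)]
  ring

end ScaleInvariant

theorem four_mul_sq_div_sq_sub_one_pos {k : ℝ} (hk : 1 < k) :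
    0 < 4 * k ^ 2 / (k + 1) ^ 2 - 1 := by
  rw [sub_pos, one_lt_div (by positivity)]
  nlinarith

theorem scalable_integral_lemma_general (L : ℝ) (w : ℝ → ℝ → ℝ)
    (hmeas : Measurable (Function.uncurry w))
    (hrange : ∀ x a : ℝ, 0 < x → 0 < a → 0 ≤ w x a ∧ w x a ≤ L)
    (hscale : ∀ c x a : ℝ, 0 < c → 0 < x → 0 < a → w (c * x) (c * a) = w x a)
    (k : ℝ) (hk : 1 < k) (a : ℝ) (ha : 0 < a)
    (hpos : ∀ x : ℝ, 0 < x → x < k * a → 0 < w x a) :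
    0 < (4 * k ^ 2 / (k + 1) ^ 2 - 1) *
        ∫ y in Set.Ioc (1 / k) ((k + 1) / (2 * k)), w 1 y ∧
    (∫ x in Set.Ioc (a / k) a, w a x) +
        ((4 * k ^ 2 / (k + 1) ^ 2 - 1) *
          ∫ y in Set.Ioc (1 / k) ((k + 1) / (2 * k)), w 1 y) * a ≤
      ∫ x in Set.Ioc a (k * a), w x a := by
  have hk0 : 0 < k := one_pos.trans hk
  have hp : 0 < 1 / k := by positivity
  set m := (k + 1) / (2 * k)
  have hpm : 1 / k < m := by rw [div_lt_div_iff₀ hk0 (by positivity)]; nlinarith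
  have hm1 : m < 1 := by rw [div_lt_one (by positivity)]; linarith
  have hf_range : ∀ u ∈ Ioc (1 / k) 1, w 1 u ∈ Icc 0 L :=
    fun u hu => hrange 1 u one_pos (hp.trans hu.1)
  have hf_int : IntegrableOn (w 1) (Ioc (1 / k) 1) :=
    integrableOn_of_mem_Icc measurableSet_Ioc measure_Ioc_lt_top.ne hmeas.of_uncurry_left
      hf_range
  have hG : 0 < ∫ y in Ioc (1 / k) m, w 1 y :=
    setIntegral_Ioc_pos hpm (hf_int.mono_set (Ioc_subset_Ioc_right hm1.le))
      fun u hu => ScaleInvariant.apply_one_pos hscale ha hk0 hpos hu.1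
  refine ⟨mul_pos (four_mul_sq_div_sq_sub_one_pos hk) hG, ?_⟩
  have hleft := ScaleInvariant.integral_Ioc_mul_right hscale ha hp (hpm.trans hm1).le
  have hright := ScaleInvariant.integral_Ioc_div_left hscale ha hp (hpm.trans hm1).le
  rw [mul_one_div, mul_one] at hleft
  rw [div_one, div_div_eq_mul_div, div_one, mul_comm] at hright
  have hC : 4 * k ^ 2 / (k + 1) ^ 2 - 1 = 1 / m ^ 2 - 1 := by
    simp only [m]; field_simp; ring
  rw [hleft, hright, hC]
  have hgain := add_mul_integral_Ioc_le_integral_Ioc_div_sq hp hm1.le hf_int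
    fun u hu => (hf_range u hu).1
  nlinarith [mul_le_mul_of_nonneg_left hgain ha.le]

/-- For a scalable two-machine allocation `w` with values in `[0, L]`, if `k > 1`,
`a > 0` and `w(x, a) > 0` for all `0 < x < k·a`, then with
`g(k) = (4k²/(k+1)² − 1)·∫_{1/k}^{(k+1)/(2k)} w(1, y) dy > 0` we have
`∫_a^{ka} w(x, a) dx ≥ ∫_{a/k}^a w(a, x) dx + g(k)·a`. -/
theorem scalable_integral_lemma (L : ℝ) (hL : 0 < L) (w : ℝ → ℝ → ℝ)
    (hmeas : Measurable (Function.uncurry w))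
    (hrange : ∀ x a : ℝ, 0 < x → 0 < a → 0 ≤ w x a ∧ w x a ≤ L)
    (hscale : ∀ c x a : ℝ, 0 < c → 0 < x → 0 < a → w (c * x) (c * a) = w x a)
    (k : ℝ) (hk : 1 < k) (a : ℝ) (ha : 0 < a)
    (hpos : ∀ x : ℝ, 0 < x → x < k * a → 0 < w x a) :
    0 < (4 * k ^ 2 / (k + 1) ^ 2 - 1) *
        ∫ y in Set.Ioc (1 / k) ((k + 1) / (2 * k)), w 1 y ∧
    (∫ x in Set.Ioc (a / k) a, w a x) +
        ((4 * k ^ 2 / (k + 1) ^ 2 - 1) *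
          ∫ y in Set.Ioc (1 / k) ((k + 1) / (2 * k)), w 1 y) * a ≤
      ∫ x in Set.Ioc a (k * a), w x a :=
  scalable_integral_lemma_general L w hmeas hrange hscale k hk a ha hpos
end

section
/- Let M = (w,p) be a deterministic, truthful, envy-free, individually rational, and anonymous mechanism for two machines, and suppose the allocation w is scalable. Then for any two machines with distinct speeds, w allocates the entire workload L to the faster machine (the one with the smaller speed value). -/
/-!
Write `f u = w(u, 1)`. Scalability gives `∫₀^∞ w(u, a) du = a ∫₀^∞ f`, so individual rationality
and the envy-freeness bound `h(a) ≤ h(1) + a L` force `∫₀^∞ f ≤ L` after letting `a → ∞`.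
On the other hand `f(x) + f(1/x) = L`, and the substitution `x ↦ 1/x` gives
`∫₀¹ f = L - ∫₁^∞ f(x)/x² dx`, so `∫₀^∞ f = L + ∫₁^∞ f(x) (1 - 1/x²) dx`.
Hence `f = 0` almost everywhere on `(1, ∞)`, and everywhere there since `f` is antitone.
-/

open MeasureTheory Set Filter
open scoped ENNReal

lemma lintegral_Ioi_zero_comp_mul_left (g : ℝ → ℝ≥0∞) {c : ℝ} (hc : 0 < c) :
    ENNReal.ofReal c * ∫⁻ x in Ioi 0, g (c * x) = ∫⁻ x in Ioi 0, g x := by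
  have himage : (c * ·) '' Ioi (0 : ℝ) = Ioi 0 := by
    rw [image_mul_left_Ioi hc, mul_zero]
  have := lintegral_image_eq_lintegral_abs_deriv_mul (measurableSet_Ioi (a := 0))
    (fun x _ => ((hasDerivAt_id' x).const_mul c).hasDerivWithinAt)
    (mul_right_injective₀ hc.ne').injOn g
  simp only [himage, mul_one, abs_of_pos hc] at this
  rw [this, lintegral_const_mul' _ _ ENNReal.ofReal_ne_top]

lemma lintegral_Ioo_zero_one_eq_lintegral_Ioi_one_comp_inv (g : ℝ → ℝ≥0∞) :
    ∫⁻ x in Ioo 0 1, g x = ∫⁻ x in Ioi 1, ENNReal.ofReal (x ^ 2)⁻¹ * g x⁻¹ := by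
  have himage : (·⁻¹) '' Ioi (1 : ℝ) = Ioo 0 1 := by
    rw [image_inv_eq_inv, inv_Ioi₀ one_pos, inv_one]
  have := lintegral_image_eq_lintegral_abs_deriv_mul (measurableSet_Ioi (a := 1))
    (fun x hx => (hasDerivAt_inv (zero_lt_one.trans hx).ne').hasDerivWithinAt)
    inv_injective.injOn g
  rwa [himage, setLIntegral_congr_fun measurableSet_Ioi fun x _ => by
    rw [abs_neg, abs_of_nonneg (by positivity)]] at this

lemma ae_eq_zero_of_add_inv_eq_of_lintegral_le {f : ℝ → ℝ} {L : ℝ} (hf : Measurable f)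
    (hf_nonneg : ∀ x, 0 < x → 0 ≤ f x) (hf_inv : ∀ x, 0 < x → f x + f x⁻¹ = L)
    (hI : ∫⁻ x in Ioi 0, ENNReal.ofReal (f x) ≤ ENNReal.ofReal L) :
    ∀ᵐ x ∂volume.restrict (Ioi 1), f x = 0 := by
  let g : ℝ → ℝ≥0∞ := fun x => ENNReal.ofReal (f x)
  let ρ : ℝ → ℝ≥0∞ := fun x => ENNReal.ofReal (x ^ 2)⁻¹
  have hsplit : (∫⁻ x in Ioo 0 1, g x) + ∫⁻ x in Ioi 1, g x ≤ ENNReal.ofReal L := by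
    rw [← lintegral_union measurableSet_Ioi (Ioc_disjoint_Ioi_same.mono_left Ioo_subset_Ioc_self)]
    refine (lintegral_mono_set ?_).trans hI
    exact union_subset Ioo_subset_Ioi_self (Ioi_subset_Ioi zero_le_one)
  have htotal : (∫⁻ x in Ioo 0 1, g x) + ∫⁻ x in Ioi 1, ρ x * g x = ENNReal.ofReal L := by
    calc (∫⁻ x in Ioo 0 1, g x) + ∫⁻ x in Ioi 1, ρ x * g x
        = ∫⁻ x in Ioi 1, (ρ x * g x⁻¹ + ρ x * g x) := by
          rw [lintegral_Ioo_zero_one_eq_lintegral_Ioi_one_comp_inv g,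
            lintegral_add_right _ (by fun_prop)]
      _ = ∫⁻ x in Ioi 1, ρ x * ENNReal.ofReal L := by
          refine setLIntegral_congr_fun measurableSet_Ioi fun x hx => ?_
          have hx0 : 0 < x := zero_lt_one.trans hx
          rw [← mul_add, ← ENNReal.ofReal_add (hf_nonneg _ (inv_pos.2 hx0)) (hf_nonneg x hx0),
            add_comm, hf_inv x hx0]
      _ = ENNReal.ofReal L := by
          rw [← lintegral_Ioo_zero_one_eq_lintegral_Ioi_one_comp_inv fun _ => ENNReal.ofReal L]
          simp
  have hfin : (∫⁻ x in Ioo 0 1, g x) ≠ ∞ :=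
    ne_top_of_le_ne_top ENNReal.ofReal_ne_top (htotal ▸ le_self_add)
  have hfin' : (∫⁻ x in Ioi 1, ρ x * g x) ≠ ∞ :=
    ne_top_of_le_ne_top ENNReal.ofReal_ne_top (htotal ▸ le_add_self)
  have hle : ∫⁻ x in Ioi 1, g x ≤ ∫⁻ x in Ioi 1, ρ x * g x :=
    (ENNReal.add_le_add_iff_left hfin).1 (hsplit.trans htotal.ge)
  have hweight : ∀ x ∈ Ioi (1 : ℝ), (x ^ 2)⁻¹ < 1 := fun x hx =>
    inv_lt_one_of_one_lt₀ (one_lt_pow₀ hx two_ne_zero)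
  have hρg : ∀ᵐ x ∂volume.restrict (Ioi 1), ρ x * g x ≤ g x :=
    ae_restrict_of_forall_mem measurableSet_Ioi fun x hx =>
      mul_le_of_le_one_left' (ENNReal.ofReal_le_one.2 (hweight x hx).le)
  filter_upwards [ae_eq_of_ae_le_of_lintegral_le hρg hfin' (by fun_prop) hle,
    ae_restrict_mem measurableSet_Ioi] with x hx hx1
  have hfx := hf_nonneg x (zero_lt_one.trans hx1)
  rw [← ENNReal.ofReal_mul (by positivity),
    ENNReal.ofReal_eq_ofReal_iff (by positivity) hfx] at hx
  nlinarith [hweight x hx1]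

lemma AntitoneOn.eq_zero_of_ae_eq_zero {f : ℝ → ℝ} {a t : ℝ} (hf : AntitoneOn f (Ioi a))
    (ht_nonneg : 0 ≤ f t) (hzero : ∀ᵐ x ∂volume.restrict (Ioi a), f x = 0) (ht : a < t) :
    f t = 0 := by
  have : (ae (volume.restrict (Ioo a t))).NeBot := ae_restrict_neBot.2 (by simp [ht])
  obtain ⟨x, hfx, hx⟩ :=
    ((ae_restrict_of_ae_restrict_of_subset (Ioo_subset_Ioi_self (a := t) (b := a)) hzero).and
      (ae_restrict_mem measurableSet_Ioo)).exists
  exact le_antisymm (hfx ▸ hf hx.1 ht hx.2.le) ht_nonneg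

lemma le_of_forall_one_lt_mul_le_add_mul {x c L : ℝ} (h : ∀ a, 1 < a → a * x ≤ c + a * L) :
    x ≤ L := by
  by_contra! hLx
  have hpos : 0 < x - L := sub_pos.2 hLx
  set a := (|c| + 1) / (x - L) + 1
  have ha : a * (x - L) = |c| + 1 + (x - L) := by
    simp only [a, add_mul, div_mul_cancel₀ _ hpos.ne', one_mul]
  have := h a (lt_add_of_pos_left _ (by positivity))
  nlinarith [le_abs_self c]

lemma ENNReal.le_ofReal_of_forall_one_lt_mul_le {I : ℝ≥0∞} (hI : I ≠ ∞) {c L : ℝ} (hL : 0 ≤ L)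
    (h : ∀ a, 1 < a → ENNReal.ofReal a * I ≤ ENNReal.ofReal (c + a * L)) :
    I ≤ ENNReal.ofReal L := by
  rw [← ENNReal.ofReal_toReal hI]
  refine ENNReal.ofReal_le_ofReal (le_of_forall_one_lt_mul_le_add_mul (c := |c|) fun a ha => ?_)
  have := h a ha
  -- `ENNReal.ofReal` truncates negative reals to `0`, hence the case split and `|c|`.
  rw [← ENNReal.ofReal_toReal hI, ← ENNReal.ofReal_mul (by linarith),
    ENNReal.ofReal_le_ofReal_iff'] at this
  rcases this with hle | hle
  · linarith [le_abs_self c]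
  · nlinarith [abs_nonneg c]

def IsScalable (w : ℝ → ℝ → ℝ) : Prop :=
  ∀ c x a : ℝ, 0 < c → 0 < x → 0 < a → w (c * x) (c * a) = w x a

lemma IsScalable.apply_eq_div_one {w : ℝ → ℝ → ℝ} (hw : IsScalable w) {x a : ℝ} (hx : 0 < x)
    (ha : 0 < a) : w x a = w (x / a) 1 := by
  simpa [mul_div_cancel₀ _ ha.ne'] using hw a (x / a) 1 ha (div_pos hx ha) one_pos

lemma IsScalable.lintegral_Ioi_zero {w : ℝ → ℝ → ℝ} (hw : IsScalable w) {a : ℝ} (ha : 0 < a) :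
    ∫⁻ u in Ioi 0, ENNReal.ofReal (w u a) =
      ENNReal.ofReal a * ∫⁻ u in Ioi 0, ENNReal.ofReal (w u 1) := by
  rw [← lintegral_Ioi_zero_comp_mul_left _ ha]
  congr 1
  refine setLIntegral_congr_fun measurableSet_Ioi fun u hu => ?_
  simpa using congrArg ENNReal.ofReal (hw a u 1 ha hu one_pos)

lemma le_add_mul_of_envyFree {L : ℝ} {w p : ℝ → ℝ → ℝ} {h : ℝ → ℝ}
    (hrange : ∀ x a : ℝ, 0 < x → 0 < a → 0 ≤ w x a ∧ w x a ≤ L)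
    (hpay : ∀ x a : ℝ, 0 < x → 0 < a →
      p x a = h a + x * w x a - ∫ u in Ioc (0 : ℝ) x, w u a)
    (hEF : ∀ x a : ℝ, 0 < x → 0 < a → p a x - x * w a x ≤ p x a - x * w x a)
    {a : ℝ} (ha : 1 < a) : h a ≤ h 1 + a * L := by
  have ha0 : 0 < a := zero_lt_one.trans ha
  have hef := hEF a 1 ha0 one_pos
  rw [hpay 1 a one_pos ha0, hpay a 1 ha0 one_pos] at hef
  have hint_le : ∫ u in Ioc (0 : ℝ) 1, w u a ≤ L := by
    have := norm_setIntegral_le_of_norm_le_const (μ := volume) (s := Ioc (0 : ℝ) 1)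
      (f := (w · a)) (by simp) fun u hu => by
        rw [Real.norm_of_nonneg (hrange u a hu.1 ha0).1]
        exact (hrange u a hu.1 ha0).2
    simpa using (le_abs_self _).trans this
  have hint_nonneg : 0 ≤ ∫ u in Ioc (0 : ℝ) a, w u 1 :=
    setIntegral_nonneg measurableSet_Ioc fun u hu => (hrange u 1 hu.1 one_pos).1
  have hw_le : (a - 1) * w 1 a ≤ (a - 1) * L :=
    mul_le_mul_of_nonneg_left (hrange 1 a one_pos ha0).2 (by linarith)
  linarith

/-- For two machines, any deterministic, truthful, envy-free, individually rational and
anonymous mechanism whose allocation is scalable must allocate the entire workload `L`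
to the quicker machine whenever the two speeds differ. -/
theorem scalable_two_machine_characterization (L : ℝ) (hL : 0 < L)
    (w : ℝ → ℝ → ℝ) (p : ℝ → ℝ → ℝ) (h : ℝ → ℝ)
    (hmeas : Measurable (Function.uncurry w))
    (hrange : ∀ x a : ℝ, 0 < x → 0 < a → 0 ≤ w x a ∧ w x a ≤ L)
    -- the two workloads sum to L (anonymity: the other machine gets w(a, x))
    (hsum : ∀ x a : ℝ, 0 < x → 0 < a → w x a + w a x = L)
    -- scalability
    (hscale : ∀ c x a : ℝ, 0 < c → 0 < x → 0 < a → w (c * x) (c * a) = w x a)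
    -- monotone nonincreasing in one's own bid (truthfulness)
    (hmono : ∀ a : ℝ, 0 < a → ∀ x y : ℝ, 0 < x → x ≤ y → w y a ≤ w x a)
    -- truthful payments
    (hpay : ∀ x a : ℝ, 0 < x → 0 < a →
      p x a = h a + x * w x a - ∫ u in Set.Ioc (0 : ℝ) x, w u a)
    -- individual rationality
    (hIR : ∀ a : ℝ, 0 < a →
      (∫⁻ u in Set.Ioi (0 : ℝ), ENNReal.ofReal (w u a)) ≤ ENNReal.ofReal (h a))
    -- envy-freeness: the machine bidding x does not envy the machine bidding a
    (hEF : ∀ x a : ℝ, 0 < x → 0 < a → p a x - x * w a x ≤ p x a - x * w x a) :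
    ∀ b₁ b₂ : ℝ, 0 < b₁ → b₁ < b₂ → w b₁ b₂ = L ∧ w b₂ b₁ = 0 := by
  have hw_scalable : IsScalable w := hscale
  have hI : ∫⁻ u in Ioi 0, ENNReal.ofReal (w u 1) ≤ ENNReal.ofReal L := by
    refine ENNReal.le_ofReal_of_forall_one_lt_mul_le (c := h 1)
      (ne_top_of_le_ne_top ENNReal.ofReal_ne_top (by simpa using hIR 1 one_pos)) hL.le
      fun a ha => ?_
    calc _ = ∫⁻ u in Ioi 0, ENNReal.ofReal (w u a) :=
          (hw_scalable.lintegral_Ioi_zero (zero_lt_one.trans ha)).symm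
      _ ≤ ENNReal.ofReal (h a) := hIR a (zero_lt_one.trans ha)
      _ ≤ ENNReal.ofReal (h 1 + a * L) :=
          ENNReal.ofReal_le_ofReal (le_add_mul_of_envyFree hrange hpay hEF ha)
  have hzero := ae_eq_zero_of_add_inv_eq_of_lintegral_le hmeas.of_uncurry_right
    (fun x hx => (hrange x 1 hx one_pos).1)
    (fun x hx => by
      rw [← hsum x 1 hx one_pos, hw_scalable.apply_eq_div_one one_pos hx, one_div]) hI
  intro b₁ b₂ hb₁ hb₁₂
  have hb₂ : 0 < b₂ := hb₁.trans hb₁₂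
  have hw : w b₂ b₁ = 0 := by
    rw [hw_scalable.apply_eq_div_one hb₂ hb₁]
    exact AntitoneOn.eq_zero_of_ae_eq_zero (f := (w · 1))
      (fun x hx y _ hxy => hmono 1 one_pos x y (zero_lt_one.trans hx) hxy)
      (hrange _ 1 (div_pos hb₂ hb₁) one_pos).1 hzero ((one_lt_div hb₁).2 hb₁₂)
  exact ⟨by linarith [hsum b₁ b₂ hb₁ hb₂], hw⟩
end

section
/- The LPT* allocation is locally efficient: for any bid vector b and machines i, k with b_i > b_k, the workload assigned by LPT* satisfies w_i(b) ≤ w_k(b). -/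
/-!
Within a class of equal rounded speeds the final reordering gives the claim directly. Otherwise
`b k < b i` forces `2 s_k ≤ s_i`. Let `j` be the last job the greedy rule put on machine `i`: it
could have gone to `k`, so `w_i s_i ≤ (w_k + l_j) s_k ≤ (w_k + w_i) s_k`, and with `2 s_k ≤ s_i`
this gives `w_i ≤ w_k`.
-/

open Finset

theorem mul_zpow_ceil_logb_le {a x y : ℝ} (ha : 1 < a) (hx : 0 < x) (hxy : x ≤ y)
    (hne : a ^ ⌈Real.logb a x⌉ ≠ a ^ ⌈Real.logb a y⌉) :
    a * a ^ ⌈Real.logb a x⌉ ≤ a ^ ⌈Real.logb a y⌉ := by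
  have hceil : ⌈Real.logb a x⌉ < ⌈Real.logb a y⌉ :=
    (Int.ceil_le_ceil (Real.logb_le_logb_of_le ha hx hxy)).lt_of_ne (fun h => hne (by rw [h]))
  calc a * a ^ ⌈Real.logb a x⌉ = a ^ (⌈Real.logb a x⌉ + 1) := by
        rw [zpow_add_one₀ (by positivity), mul_comm]
    _ ≤ a ^ ⌈Real.logb a y⌉ := zpow_le_zpow_right₀ ha.le hceil

namespace GreedyAssignment

variable {ι κ : Type*} [Fintype ι] [DecidableEq κ]

def load (A : ι → κ) (l : ι → ℝ) (i : κ) : ℝ :=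
  ∑ j ∈ univ.filter (fun j => A j = i), l j

theorem load_nonneg {A : ι → κ} {l : ι → ℝ} (hl : ∀ j, 0 ≤ l j) (i : κ) : 0 ≤ load A l i :=
  sum_nonneg fun j _ => hl j

variable [LinearOrder ι]

def loadBefore (A : ι → κ) (l : ι → ℝ) (j : ι) (i : κ) : ℝ :=
  ∑ j' ∈ univ.filter (fun j' => j' < j ∧ A j' = i), l j'

variable {A : ι → κ} {l : ι → ℝ}

theorem loadBefore_nonneg (hl : ∀ j, 0 ≤ l j) (j : ι) (i : κ) : 0 ≤ loadBefore A l j i :=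
  sum_nonneg fun j _ => hl j

theorem loadBefore_le_load (hl : ∀ j, 0 ≤ l j) (j : ι) (i : κ) :
    loadBefore A l j i ≤ load A l i :=
  sum_le_sum_of_subset_of_nonneg (monotone_filter_right _ fun _ _ h => h.2) fun j _ _ => hl j

theorem exists_load_eq_loadBefore_add {i : κ} (hi : ∃ j, A j = i) :
    ∃ j, A j = i ∧ load A l i = loadBefore A l j i + l j := by
  have hne : (univ.filter (fun j => A j = i)).Nonempty :=
    filter_nonempty_iff.mpr (by simpa using hi)
  set last := (univ.filter (fun j => A j = i)).max' hne
  have hlast : A last = i := (mem_filter.mp (max'_mem _ hne)).2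
  have hsplit : univ.filter (fun j => A j = i) =
      insert last (univ.filter (fun j => j < last ∧ A j = i)) := by
    ext j
    simp only [mem_filter, mem_univ, true_and, mem_insert]
    constructor
    · intro hj
      exact (le_max' _ j (by simpa using hj)).eq_or_lt.imp id fun h => ⟨h, hj⟩
    · rintro (rfl | ⟨-, hj⟩)
      exacts [hlast, hj]
  refine ⟨last, hlast, ?_⟩
  rw [load, hsplit, sum_insert (by simp), loadBefore, add_comm]

def IsGreedy (A : ι → κ) (l : ι → ℝ) (s : κ → ℝ) : Prop :=
  ∀ j i, (loadBefore A l j (A j) + l j) * s (A j) ≤ (loadBefore A l j i + l j) * s i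

variable {s : κ → ℝ}

/-- The last job put on `i` could have gone to `k` instead. -/
theorem load_mul_le (hl : ∀ j, 0 ≤ l j) (hgreedy : IsGreedy A l s) {i k : κ} (hk : 0 ≤ s k) :
    load A l i * s i ≤ (load A l k + load A l i) * s k := by
  by_cases hi : ∃ j, A j = i
  · obtain ⟨j, rfl, hload⟩ := exists_load_eq_loadBefore_add (l := l) hi
    have hlj : l j ≤ load A l (A j) := by linarith [loadBefore_nonneg (A := A) hl j (A j)]
    calc load A l (A j) * s (A j) ≤ (loadBefore A l j k + l j) * s k := hload ▸ hgreedy j k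
      _ ≤ (load A l k + load A l (A j)) * s k := by
          gcongr
          exact loadBefore_le_load hl j k
  · have hzero : load A l i = 0 := sum_eq_zero fun j hj => absurd ⟨j, (mem_filter.mp hj).2⟩ hi
    rw [hzero, zero_mul, add_zero]
    exact mul_nonneg (load_nonneg hl k) hk

theorem load_le_of_two_mul_le (hl : ∀ j, 0 ≤ l j) (hgreedy : IsGreedy A l s) {i k : κ}
    (hk : 0 < s k) (hspeed : 2 * s k ≤ s i) : load A l i ≤ load A l k := by
  have h := load_mul_le hl hgreedy (i := i) hk.le
  nlinarith [load_nonneg hl (A := A) i]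

end GreedyAssignment

open GreedyAssignment in
theorem LPTstar_locally_efficient_general (m n : ℕ)
    (b : Fin m → ℝ) (hb : ∀ i, 0 < b i)
    (l : Fin n → ℝ) (hl : ∀ j, 0 < l j)
    -- rounded speeds
    (s : Fin m → ℝ) (hs : ∀ i, s i = (2 : ℝ) ^ (⌈Real.logb 2 (b i)⌉))
    -- greedy assignment, with W j i the workload of machine i before job j
    (A : Fin n → Fin m) (W : Fin n → Fin m → ℝ)
    (hWdef : ∀ (j : Fin n) (i : Fin m),
      W j i = ∑ j' ∈ Finset.univ.filter (fun j' => j' < j ∧ A j' = i), l j')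
    (hgreedy : ∀ (j : Fin n) (i : Fin m),
      (W j (A j) + l j) * s (A j) ≤ (W j i + l j) * s i)
    -- final workloads after reordering bundles by the permutation π,
    -- which only permutes machines of equal rounded speed
    (w : Fin m → ℝ) (π : Equiv.Perm (Fin m))
    (hπ : ∀ i, s (π i) = s i)
    (hwdef : ∀ i, w i = ∑ j ∈ Finset.univ.filter (fun j => A j = π i), l j)
    -- among machines of the same rounded speed, a smaller bid gets more workload
    (hreorder : ∀ i k : Fin m, s i = s k → b k < b i → w i ≤ w k) :
    ∀ i k : Fin m, b k < b i → w i ≤ w k := by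
  intro i k hbk
  by_cases hsik : s i = s k
  · exact hreorder i k hsik hbk
  have hW : W = loadBefore A l := funext₂ hWdef
  have hA : IsGreedy A l s := by subst hW; exact hgreedy
  have hw : ∀ i, w i = load A l (π i) := hwdef
  have hspeed : 2 * s k ≤ s i := by
    rw [hs, hs] at hsik ⊢
    exact mul_zpow_ceil_logb_le one_lt_two (hb k) hbk.le (Ne.symm hsik)
  rw [hw, hw]
  refine load_le_of_two_mul_le (s := s) (fun j => (hl j).le) hA ?_ ?_
  · rw [hπ, hs]; positivity
  · rwa [hπ, hπ]

/-- The LPT* allocation is locally efficient: if `b i > b k` then the workload of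
machine `i` is at most that of machine `k`.  The LPT* allocation is described by:
rounded speeds `s i = 2^{⌈log₂ (b i)⌉}`, a greedy assignment `A` of jobs (sorted in
nonincreasing length) minimizing `(w^j + l j)·s`, and a final reordering `π` within
equal rounded-speed classes so that a machine with smaller bid gets at least as much
workload. -/
theorem LPTstar_locally_efficient (m n : ℕ)
    (b : Fin m → ℝ) (hb : ∀ i, 0 < b i)
    (l : Fin n → ℝ) (hl : ∀ j, 0 < l j)
    (hlsorted : ∀ j j' : Fin n, j ≤ j' → l j' ≤ l j)
    -- rounded speeds
    (s : Fin m → ℝ) (hs : ∀ i, s i = (2 : ℝ) ^ (⌈Real.logb 2 (b i)⌉))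
    -- greedy assignment, with W j i the workload of machine i before job j
    (A : Fin n → Fin m) (W : Fin n → Fin m → ℝ)
    (hWdef : ∀ (j : Fin n) (i : Fin m),
      W j i = ∑ j' ∈ Finset.univ.filter (fun j' => j' < j ∧ A j' = i), l j')
    (hgreedy : ∀ (j : Fin n) (i : Fin m),
      (W j (A j) + l j) * s (A j) ≤ (W j i + l j) * s i)
    -- final workloads after reordering bundles by the permutation π,
    -- which only permutes machines of equal rounded speed
    (w : Fin m → ℝ) (π : Equiv.Perm (Fin m))
    (hπ : ∀ i, s (π i) = s i)
    (hwdef : ∀ i, w i = ∑ j ∈ Finset.univ.filter (fun j => A j = π i), l j)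
    -- among machines of the same rounded speed, a smaller bid gets more workload
    (hreorder : ∀ i k : Fin m, s i = s k → b k < b i → w i ≤ w k) :
    ∀ i k : Fin m, b k < b i → w i ≤ w k :=
  LPTstar_locally_efficient_general m n b hb l hl s hs A W hWdef hgreedy w π hπ hwdef hreorder
end

section
/- In the greedy LPT* assignment, if machine i has strictly larger rounded speed than machine k (s_i ≥ 2·s_k), then the final workloads satisfy w_k(b) ≥ w_i(b). More precisely, if j is the last job assigned to machine i, then w_k^j ≥ 2·w_i^j + l_j, where w^j denotes workloads just before job j is assigned. -/
/-!
When job `j` goes to `i`, the greedy rule says `i` was at least as good as `k`: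
`(W_i + l_j) s_i ≤ (W_k + l_j) s_k`; since `s_i ≥ 2 s_k > 0` this forces
`2 (W_i + l_j) ≤ W_k + l_j`. Applied to the last job `j` on `i`, whose completion load
`W_i + l_j` is the final load of `i`, and using that `W_k` only grows, the final load of
`k` dominates that of `i`.
-/

open Finset

theorem two_mul_add_le_of_mul_le_mul {α : Type*} [Field α] [LinearOrder α]
    [IsStrictOrderedRing α] {a b l s t : α} (h : (a + l) * s ≤ (b + l) * t) (ht : 0 < t)
    (hts : 2 * t ≤ s) (hal : 0 ≤ a + l) : 2 * a + l ≤ b := by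
  have : (a + l) * (2 * t) ≤ (b + l) * t := (mul_le_mul_of_nonneg_left hts hal).trans h
  nlinarith

section Prefix

variable {ι κ M : Type*} [Fintype ι] [LinearOrder ι] [DecidableEq κ]

theorem sum_filter_eq_sum_filter_lt_add [AddCommMonoid M] (A : ι → κ) (l : ι → M)
    {i : κ} {j : ι} (hj : A j = i) (hmax : ∀ j', A j' = i → j' ≤ j) :
    ∑ j' ∈ univ.filter (fun j' => A j' = i), l j' =
      ∑ j' ∈ univ.filter (fun j' => j' < j ∧ A j' = i), l j' + l j := by
  have hsplit : univ.filter (fun j' => A j' = i) =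
      insert j (univ.filter (fun j' => j' < j ∧ A j' = i)) := by
    ext j'
    simp only [mem_filter, mem_univ, true_and, mem_insert]
    exact ⟨fun h => (hmax j' h).eq_or_lt.imp id (⟨·, h⟩), by rintro (rfl | ⟨-, h⟩) <;> assumption⟩
  rw [hsplit, sum_insert (by simp), add_comm]

theorem sum_filter_lt_le_sum_filter [AddCommMonoid M] [PartialOrder M]
    [IsOrderedAddMonoid M] (A : ι → κ) {l : ι → M} (hl : ∀ j, 0 ≤ l j) (i : κ) (j : ι) :
    ∑ j' ∈ univ.filter (fun j' => j' < j ∧ A j' = i), l j' ≤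
      ∑ j' ∈ univ.filter (fun j' => A j' = i), l j' :=
  sum_le_sum_of_subset_of_nonneg (monotone_filter_right _ fun _ _ h => h.2) fun j' _ _ => hl j'

end Prefix

/-- In the greedy LPT* assignment, if machine `i` has rounded speed at least twice that
of machine `k`, then the final workloads satisfy `w k ≥ w i`; more precisely, if `j` is
the last job assigned to machine `i`, then `W j k ≥ 2·W j i + l j`, where `W j`
denotes workloads just before job `j` is assigned. -/
theorem LPTstar_greedy_speed_gap (m n : ℕ)
    (s : Fin m → ℝ) (l : Fin n → ℝ) (hl : ∀ j, 0 < l j)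
    (A : Fin n → Fin m) (W : Fin n → Fin m → ℝ)
    (hWdef : ∀ (j : Fin n) (i : Fin m),
      W j i = ∑ j' ∈ Finset.univ.filter (fun j' => j' < j ∧ A j' = i), l j')
    (hgreedy : ∀ (j : Fin n) (i : Fin m),
      (W j (A j) + l j) * s (A j) ≤ (W j i + l j) * s i)
    (i k : Fin m) (hsk : 0 < s k) (hgap : 2 * s k ≤ s i) :
    (∑ j ∈ Finset.univ.filter (fun j => A j = i), l j) ≤
      (∑ j ∈ Finset.univ.filter (fun j => A j = k), l j) ∧
    ∀ j : Fin n, A j = i → (∀ j' : Fin n, A j' = i → j' ≤ j) →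
      2 * W j i + l j ≤ W j k := by
  have hW_nonneg : ∀ j i, 0 ≤ W j i := fun j i =>
    hWdef j i ▸ sum_nonneg fun j' _ => (hl j').le
  have hgreedy_i : ∀ j, A j = i → 2 * W j i + l j ≤ W j k := fun j hj =>
    two_mul_add_le_of_mul_le_mul (hj ▸ hgreedy j k) hsk hgap
      (add_nonneg (hW_nonneg j i) (hl j).le)
  refine ⟨?_, fun j hj _ => hgreedy_i j hj⟩
  obtain hempty | hne := (univ.filter (fun j => A j = i)).eq_empty_or_nonempty
  · rw [hempty, sum_empty]
    exact sum_nonneg fun j _ => (hl j).le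
  obtain ⟨j, hj, hmax⟩ := exists_max_image _ id hne
  simp only [mem_filter, mem_univ, true_and, id] at hj hmax
  calc ∑ j' ∈ univ.filter (fun j' => A j' = i), l j' = W j i + l j := by
        rw [sum_filter_eq_sum_filter_lt_add A l hj hmax, hWdef]
    _ ≤ W j k := by linarith [hgreedy_i j hj, hW_nonneg j i]
    _ ≤ _ := hWdef j k ▸ sum_filter_lt_le_sum_filter A (fun j => (hl j).le) k j
end

section
/- The makespan-minimizing allocation for two machines (tie-broken by minimizing total completion time) is monotone: if the allocation at bids (b₁, b₂) gives workloads (L₁, L₂) with b₁L₁ ≥ b₂L₂, and machine 2 raises its bid to b₂' > b₂ producing workloads (L₁', L₂'), then L₂' ≤ L₂. -/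
/-!
Suppose machine 2 received more work after raising its bid, so machine 1 now has less. At the
old bids machine 1 was the bottleneck, and the new allocation is no better than the old one
there; since it lowers machine 1's load, its makespan must come from machine 2, so
`b₁ L₁ ≤ b₂ L₂'`. After the raise `b₂' L₂'` is strictly larger than both `b₁ L₁` and `b₂' L₂`,
so the old allocation has strictly smaller makespan at the new bids, contradicting the
optimality of the new one.
-/

open Finset

namespace TwoMachine

variable {ι : Type*} [Fintype ι] [DecidableEq ι] (l : ι → ℝ) (b₁ b₂ : ℝ)

def makespan (T : Finset ι) : ℝ :=
  max (b₁ * ∑ j ∈ T, l j) (b₂ * ∑ j ∈ Tᶜ, l j)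

def totalCompletion (T : Finset ι) : ℝ :=
  b₁ * ∑ j ∈ T, l j + b₂ * ∑ j ∈ Tᶜ, l j

def IsLexOptimal (S : Finset ι) : Prop :=
  ∀ T : Finset ι, T ≠ S → makespan l b₁ b₂ S < makespan l b₁ b₂ T ∨
    (makespan l b₁ b₂ S = makespan l b₁ b₂ T ∧
      totalCompletion l b₁ b₂ S < totalCompletion l b₁ b₂ T)

variable {l b₁ b₂}

theorem IsLexOptimal.makespan_le {S : Finset ι} (hS : IsLexOptimal l b₁ b₂ S) (T : Finset ι) :
    makespan l b₁ b₂ S ≤ makespan l b₁ b₂ T := by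
  obtain rfl | hTS := eq_or_ne T S
  · exact le_rfl
  · rcases hS T hTS with hlt | ⟨heq, -⟩
    exacts [hlt.le, heq.le]

theorem sum_lt_of_sum_compl_lt {S T : Finset ι} (h : ∑ j ∈ Sᶜ, l j < ∑ j ∈ Tᶜ, l j) :
    ∑ j ∈ T, l j < ∑ j ∈ S, l j := by
  have hS := sum_add_sum_compl S l
  have hT := sum_add_sum_compl T l
  linarith

theorem IsLexOptimal.mul_sum_le_of_sum_lt {S T : Finset ι} (hS : IsLexOptimal l b₁ b₂ S)
    (hb₁ : 0 < b₁) (hbottleneck : b₂ * ∑ j ∈ Sᶜ, l j ≤ b₁ * ∑ j ∈ S, l j)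
    (hT : ∑ j ∈ T, l j < ∑ j ∈ S, l j) :
    b₁ * ∑ j ∈ S, l j ≤ b₂ * ∑ j ∈ Tᶜ, l j := by
  have hle : b₁ * ∑ j ∈ S, l j ≤ makespan l b₁ b₂ T := by
    simpa only [makespan, max_eq_left hbottleneck] using hS.makespan_le T
  have hlt : b₁ * ∑ j ∈ T, l j < b₁ * ∑ j ∈ S, l j := mul_lt_mul_of_pos_left hT hb₁
  exact (le_max_iff.mp hle).resolve_left hlt.not_ge

theorem makespan_lt_of_mul_sum_le {S T : Finset ι} {b₂' : ℝ} (hl : ∀ j, 0 ≤ l j)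
    (hb₂ : 0 < b₂) (hb₂' : b₂ < b₂') (hST : ∑ j ∈ Sᶜ, l j < ∑ j ∈ Tᶜ, l j)
    (hbottleneck : b₁ * ∑ j ∈ S, l j ≤ b₂ * ∑ j ∈ Tᶜ, l j) :
    makespan l b₁ b₂' S < makespan l b₁ b₂' T := by
  have hTpos : 0 < ∑ j ∈ Tᶜ, l j :=
    (sum_nonneg fun j _ => hl j).trans_lt hST
  have h₁ : b₁ * ∑ j ∈ S, l j < b₂' * ∑ j ∈ Tᶜ, l j :=
    hbottleneck.trans_lt (mul_lt_mul_of_pos_right hb₂' hTpos)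
  have h₂ : b₂' * ∑ j ∈ Sᶜ, l j < b₂' * ∑ j ∈ Tᶜ, l j :=
    mul_lt_mul_of_pos_left hST (hb₂.trans hb₂')
  exact (max_lt h₁ h₂).trans_le (le_max_right _ _)

end TwoMachine

open TwoMachine in
/-- The makespan-minimizing allocation for two machines (with ties broken by
minimizing total completion time, assumed to select a unique optimum) is monotone:
if the allocation at bids `(b₁, b₂)` gives workloads `(L₁, L₂)` with `b₁L₁ ≥ b₂L₂`
and machine 2 raises its bid to `b₂' > b₂` producing workloads `(L₁', L₂')`, then
`L₂' ≤ L₂`.  An allocation is a subset `S` of the jobs given to machine 1. -/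
theorem makespan_min_allocation_monotone (n : ℕ) (l : Fin n → ℝ)
    (hl : ∀ j, 0 < l j)
    (b₁ b₂ b₂' : ℝ) (hb₁ : 0 < b₁) (hb₂ : 0 < b₂) (hb₂' : b₂ < b₂')
    (S S' : Finset (Fin n))
    -- S is the unique lexicographic (makespan, total completion time) optimum at (b₁, b₂)
    (hopt : ∀ T : Finset (Fin n), T ≠ S →
      max (b₁ * ∑ j ∈ S, l j) (b₂ * ∑ j ∈ Sᶜ, l j) <
          max (b₁ * ∑ j ∈ T, l j) (b₂ * ∑ j ∈ Tᶜ, l j) ∨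
        (max (b₁ * ∑ j ∈ S, l j) (b₂ * ∑ j ∈ Sᶜ, l j) =
            max (b₁ * ∑ j ∈ T, l j) (b₂ * ∑ j ∈ Tᶜ, l j) ∧
          b₁ * ∑ j ∈ S, l j + b₂ * ∑ j ∈ Sᶜ, l j <
            b₁ * ∑ j ∈ T, l j + b₂ * ∑ j ∈ Tᶜ, l j))
    -- S' is the unique lexicographic optimum at (b₁, b₂')
    (hopt' : ∀ T : Finset (Fin n), T ≠ S' →
      max (b₁ * ∑ j ∈ S', l j) (b₂' * ∑ j ∈ S'ᶜ, l j) <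
          max (b₁ * ∑ j ∈ T, l j) (b₂' * ∑ j ∈ Tᶜ, l j) ∨
        (max (b₁ * ∑ j ∈ S', l j) (b₂' * ∑ j ∈ S'ᶜ, l j) =
            max (b₁ * ∑ j ∈ T, l j) (b₂' * ∑ j ∈ Tᶜ, l j) ∧
          b₁ * ∑ j ∈ S', l j + b₂' * ∑ j ∈ S'ᶜ, l j <
            b₁ * ∑ j ∈ T, l j + b₂' * ∑ j ∈ Tᶜ, l j))
    -- w.l.o.g. machine 1 determines the makespan at (b₁, b₂)
    (hwlog : b₂ * ∑ j ∈ Sᶜ, l j ≤ b₁ * ∑ j ∈ S, l j) :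
    ∑ j ∈ S'ᶜ, l j ≤ ∑ j ∈ Sᶜ, l j := by
  have hS : IsLexOptimal l b₁ b₂ S := hopt
  have hS' : IsLexOptimal l b₁ b₂' S' := hopt'
  by_contra! hmore
  have hbottleneck : b₁ * ∑ j ∈ S, l j ≤ b₂ * ∑ j ∈ S'ᶜ, l j :=
    hS.mul_sum_le_of_sum_lt hb₁ hwlog (sum_lt_of_sum_compl_lt hmore)
  have hbetter : makespan l b₁ b₂' S < makespan l b₁ b₂' S' :=
    makespan_lt_of_mul_sum_le (fun j => (hl j).le) hb₂ hb₂' hmore hbottleneck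
  exact (hS'.makespan_le S).not_gt hbetter
end
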